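/- Let $n \ge 0$ and $d \ge 1$ be integers and let $a_0, \dots, a_n$ be nonnegative integers. Define the polynomial $A(t) = \sum_{i=0}^n a_i\, t^i\, (1+d t)^{n-i} + d^{n+1} t^{n+1} \in \mathbb{Z}[t]$. Then: (a) in $\mathbb{Z}[[t]]$ one has $T_d\Big( \sum_{i=0}^n a_i t^i + d^{n+1} t^{n+1} (1-d t)^{-1} \Big) = A(t)\,(1+d t)^{-(n+1)}$; (b) all coefficients of $A$ are nonnegative; (c) $A$ has degree exactly $n+1$, with leading coefficient $d^{n+1}$. (This is the computational content of the rationality of the Segre zeta function: the push-forward of the ordinary Segre class of the linear join satisfies $\iota_{N*} s(Z^{(d)}_N, \mathbb{P}^N) = \frac{A(H)}{(1+dH)^{n+1}} \cap [\mathbb{P}^N]$ with $A$ independent of $N$ and with nonnegative coefficients.) -/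

import Mathlib

open PowerSeries Finset

/-- The power series `1 + λ t`. -/
noncomputable def oneAdd {R : Type*} [CommRing R] (l : R) : PowerSeries R :=
  1 + PowerSeries.C l * PowerSeries.X

/-- The inverse power series `(1 + λ t)⁻¹`, via `invOfUnit` (constant coefficient `1`). -/
noncomputable def invOneAdd {R : Type*} [CommRing R] (l : R) : PowerSeries R :=
  PowerSeries.invOfUnit (oneAdd l) 1

/-- The tensor operation `T_λ`, defined coefficientwise:
`T_λ(∑ aᵢ tⁱ) = ∑ aᵢ tⁱ (1+λt)^{-(i+1)}`; the coefficient of `t^m` is the finite sum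
`∑_{i=0}^m aᵢ · [t^{m-i}] (1+λt)^{-(i+1)}`. -/
noncomputable def T {R : Type*} [CommRing R] (l : R) (F : PowerSeries R) : PowerSeries R :=
  PowerSeries.mk fun m => ∑ i ∈ Finset.range (m + 1),
    PowerSeries.coeff i F * PowerSeries.coeff (m - i) (invOneAdd l ^ (i + 1))

/-! The operation `T_λ` is the substitution `t ↦ t/(1+λt)` followed by multiplication by
`(1+λt)⁻¹`. Since substitution is a ring homomorphism and sends `1 - λt` to `(1+λt)⁻¹`, it sends
`(1 - λt)⁻¹` to `1 + λt`; so the vertex term `d^{n+1} t^{n+1} (1-dt)⁻¹` becomes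
`d^{n+1} t^{n+1} (1+dt)^{-(n+1)}`, while `aᵢ tⁱ` becomes `aᵢ tⁱ (1+dt)^{-(i+1)}`. Over the common
denominator `(1+dt)^{n+1}` this is the numerator `A`. Its coefficients are nonnegative because
`A` is the image of a polynomial over `ℕ`, and its degree is `n+1` because the terms `i ≤ n`
have degree at most `n`. -/

section TensorOperation

variable {R : Type*} [CommRing R]

theorem oneAdd_mul_invOneAdd (l : R) : oneAdd l * invOneAdd l = 1 :=
  mul_invOfUnit _ _ (by simp [oneAdd])

theorem invOneAdd_eq_one_sub (l : R) : invOneAdd l = 1 - C l * X * invOneAdd l := by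
  have h := oneAdd_mul_invOneAdd l
  unfold oneAdd at h
  linear_combination h

theorem oneAdd_pow_sub_mul_invOneAdd_pow (l : R) {i n : ℕ} (h : i ≤ n) :
    oneAdd l ^ (n - i) * invOneAdd l ^ (n + 1) = invOneAdd l ^ (i + 1) := by
  rw [show n + 1 = (n - i) + (i + 1) by omega, pow_add, ← mul_assoc, ← mul_pow,
    oneAdd_mul_invOneAdd, one_pow, one_mul]

theorem hasSubst_X_mul_invOneAdd (l : R) : HasSubst (X * invOneAdd l) :=
  HasSubst.of_constantCoeff_zero' (by simp)

theorem substAlgHom_C {b : R⟦X⟧} (hb : HasSubst b) (r : R) : substAlgHom hb (C r) = C r :=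
  (substAlgHom hb).commutes r

theorem substAlgHom_invOneAdd_neg (l : R) :
    substAlgHom (hasSubst_X_mul_invOneAdd l) (invOneAdd (-l)) = oneAdd l := by
  set ψ := substAlgHom (R := R) (hasSubst_X_mul_invOneAdd l)
  have hψ : ψ (oneAdd (-l)) = invOneAdd l := by
    simp only [oneAdd, map_add, map_one, map_mul, map_neg, substAlgHom_X, substAlgHom_C, ψ]
    linear_combination (invOneAdd_eq_one_sub l).symm
  have hinv : invOneAdd l * ψ (invOneAdd (-l)) = 1 := by
    rw [← hψ, ← map_mul, oneAdd_mul_invOneAdd, map_one]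
  calc ψ (invOneAdd (-l)) = oneAdd l * invOneAdd l * ψ (invOneAdd (-l)) := by
        rw [oneAdd_mul_invOneAdd, one_mul]
    _ = oneAdd l := by rw [mul_assoc, hinv, mul_one]

theorem T_eq_mul_subst (l : R) (F : R⟦X⟧) :
    T l F = invOneAdd l * F.subst (X * invOneAdd l) := by
  ext m
  -- `(X * invOneAdd l) ^ i` has order `i`, so only the terms `i ≤ m` reach degree `m`.
  have hsubst : ∀ q ≤ m, coeff q (F.subst (X * invOneAdd l)) =
      ∑ i ∈ range (m + 1), coeff i F * coeff q (X ^ i * invOneAdd l ^ i) := by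
    intro q hq
    rw [coeff_subst' (hasSubst_X_mul_invOneAdd l),
      finsum_eq_sum_of_support_subset (s := range (m + 1))]
    · simp only [smul_eq_mul, mul_pow]
    · intro i hi
      simp only [Function.mem_support, coe_range, Set.mem_Iio] at hi ⊢
      by_contra h
      rw [mul_pow, coeff_X_pow_mul', if_neg (by omega), smul_zero] at hi
      exact hi rfl
  rw [coeff_mul, sum_congr rfl fun p hp => by
    rw [hsubst p.2 (by rw [HasAntidiagonal.mem_antidiagonal] at hp; omega), mul_sum]]
  rw [sum_comm]
  simp only [T, coeff_mk]
  refine sum_congr rfl fun i hi => ?_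
  simp only [mul_left_comm (coeff _ (invOneAdd l)), ← mul_sum, ← coeff_mul]
  rw [mul_left_comm, ← pow_succ', coeff_X_pow_mul', if_pos (by simpa [Nat.lt_succ_iff] using hi)]

theorem T_add (l : R) (F G : R⟦X⟧) : T l (F + G) = T l F + T l G := by
  simp only [T_eq_mul_subst, ← coe_substAlgHom (hasSubst_X_mul_invOneAdd l), map_add, mul_add]

theorem T_sum {ι : Type*} (l : R) (s : Finset ι) (F : ι → R⟦X⟧) :
    T l (∑ i ∈ s, F i) = ∑ i ∈ s, T l (F i) := by
  simp only [T_eq_mul_subst, ← coe_substAlgHom (hasSubst_X_mul_invOneAdd l), map_sum, mul_sum]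

theorem T_C_mul_X_pow (l a : R) (j : ℕ) :
    T l (C a * X ^ j) = C a * X ^ j * invOneAdd l ^ (j + 1) := by
  rw [T_eq_mul_subst, ← coe_substAlgHom (hasSubst_X_mul_invOneAdd l)]
  simp only [map_mul, map_pow, substAlgHom_C, substAlgHom_X]
  ring

theorem T_C_mul_X_pow_mul_invOneAdd_neg (l a : R) (j : ℕ) :
    T l (C a * X ^ j * invOneAdd (-l)) = C a * X ^ j * invOneAdd l ^ j := by
  rw [T_eq_mul_subst, ← coe_substAlgHom (hasSubst_X_mul_invOneAdd l)]
  simp only [map_mul, map_pow, substAlgHom_C, substAlgHom_X, substAlgHom_invOneAdd_neg]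
  linear_combination C a * X ^ j * invOneAdd l ^ j * oneAdd_mul_invOneAdd l

end TensorOperation

section SegreNumerator

variable {S : Type*} [CommSemiring S]

noncomputable def segreNumerator (n : ℕ) (d : S) (a : Fin (n + 1) → S) : Polynomial S :=
  (∑ i : Fin (n + 1), Polynomial.C (a i) * Polynomial.X ^ (i : ℕ) *
    (1 + Polynomial.C d * Polynomial.X) ^ (n - (i : ℕ))) +
    Polynomial.C (d ^ (n + 1)) * Polynomial.X ^ (n + 1)

theorem segreNumerator_map {S' : Type*} [CommSemiring S'] (f : S →+* S') (n : ℕ) (d : S)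
    (a : Fin (n + 1) → S) :
    (segreNumerator n d a).map f = segreNumerator n (f d) (f ∘ a) := by
  simp [segreNumerator, Polynomial.map_sum]

theorem natDegree_sum_C_mul_X_pow_mul_one_add_pow_le (n : ℕ) (d : S) (a : Fin (n + 1) → S) :
    (∑ i : Fin (n + 1), Polynomial.C (a i) * Polynomial.X ^ (i : ℕ) *
      (1 + Polynomial.C d * Polynomial.X) ^ (n - (i : ℕ))).natDegree ≤ n := by
  refine Polynomial.natDegree_sum_le_of_forall_le _ _ fun i _ => ?_
  have hlin : (1 + Polynomial.C d * Polynomial.X).natDegree ≤ 1 := by compute_degree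
  calc _ ≤ (i : ℕ) + (n - i) * 1 := Polynomial.natDegree_mul_le_of_le
        (Polynomial.natDegree_C_mul_X_pow_le _ _) (Polynomial.natDegree_pow_le_of_le _ hlin)
    _ = n := by omega

theorem natDegree_segreNumerator {n : ℕ} {d : S} (hd : d ^ (n + 1) ≠ 0) (a : Fin (n + 1) → S) :
    (segreNumerator n d a).natDegree = n + 1 := by
  rw [segreNumerator, Polynomial.natDegree_add_eq_right_of_natDegree_lt] <;>
    rw [Polynomial.natDegree_C_mul_X_pow _ _ hd]
  exact Nat.lt_succ_of_le (natDegree_sum_C_mul_X_pow_mul_one_add_pow_le n d a)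

theorem leadingCoeff_segreNumerator {n : ℕ} {d : S} (hd : d ^ (n + 1) ≠ 0)
    (a : Fin (n + 1) → S) : (segreNumerator n d a).leadingCoeff = d ^ (n + 1) := by
  rw [segreNumerator, Polynomial.leadingCoeff_add_of_degree_lt,
    Polynomial.leadingCoeff_C_mul_X_pow]
  refine Polynomial.degree_lt_degree ?_
  rw [Polynomial.natDegree_C_mul_X_pow _ _ hd]
  exact Nat.lt_succ_of_le (natDegree_sum_C_mul_X_pow_mul_one_add_pow_le n d a)

end SegreNumerator

theorem coeff_segreNumerator_nonneg {n : ℕ} {d : ℤ} (hd : 0 ≤ d) {a : Fin (n + 1) → ℤ}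
    (ha : ∀ i, 0 ≤ a i) (k : ℕ) : 0 ≤ (segreNumerator n d a).coeff k := by
  have hnat : segreNumerator n d a =
      (segreNumerator n d.toNat (fun i => (a i).toNat)).map (Nat.castRingHom ℤ) := by
    rw [segreNumerator_map]
    congr
    · simp [hd]
    · funext i
      simp [ha i]
  rw [hnat, Polynomial.coeff_map]
  exact Nat.cast_nonneg _

theorem T_eq_segreNumerator_mul_invOneAdd_pow {R : Type*} [CommRing R] (n : ℕ) (d : R)
    (a : Fin (n + 1) → R) :
    T d ((∑ i : Fin (n + 1), C (a i) * X ^ (i : ℕ)) +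
        C (d ^ (n + 1)) * X ^ (n + 1) * invOneAdd (-d)) =
      (segreNumerator n d a : R⟦X⟧) * invOneAdd d ^ (n + 1) := by
  rw [T_add, T_sum, T_C_mul_X_pow_mul_invOneAdd_neg, segreNumerator]
  simp only [← Polynomial.coeToPowerSeries.ringHom_apply, map_add, map_sum, map_mul, map_pow,
    map_one]
  simp only [Polynomial.coeToPowerSeries.ringHom_apply, Polynomial.coe_C, Polynomial.coe_X,
    add_mul, sum_mul]
  congr 1
  refine sum_congr rfl fun i _ => ?_
  rw [T_C_mul_X_pow, ← oneAdd, ← oneAdd_pow_sub_mul_invOneAdd_pow d (Nat.lt_succ_iff.mp i.isLt)]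
  ring

/-- Rationality of the Segre zeta function for ideals generated in a single degree:
with `A(t) = ∑ aᵢ tⁱ (1+dt)^{n-i} + d^{n+1} t^{n+1}`, one has
`T_d(∑ aᵢ tⁱ + d^{n+1} t^{n+1} (1-dt)⁻¹) = A(t) (1+dt)^{-(n+1)}`, `A` has nonnegative
coefficients, and `A` has degree exactly `n+1` with leading coefficient `d^{n+1}`. -/
theorem segre_zeta_rationality (n : ℕ) (d : ℤ) (hd : 1 ≤ d) (a : Fin (n + 1) → ℤ)
    (ha : ∀ i, 0 ≤ a i) (A : Polynomial ℤ)
    (hA : A = (∑ i : Fin (n + 1), Polynomial.C (a i) * Polynomial.X ^ (i : ℕ) *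
        (1 + Polynomial.C d * Polynomial.X) ^ (n - (i : ℕ))) +
        Polynomial.C (d ^ (n + 1)) * Polynomial.X ^ (n + 1)) :
    T d ((∑ i : Fin (n + 1), PowerSeries.C (a i) * PowerSeries.X ^ (i : ℕ)) +
        PowerSeries.C (d ^ (n + 1)) * PowerSeries.X ^ (n + 1) * invOneAdd (-d)) =
      (A : PowerSeries ℤ) * invOneAdd d ^ (n + 1) ∧
    (∀ k : ℕ, 0 ≤ A.coeff k) ∧
    A.natDegree = n + 1 ∧ A.leadingCoeff = d ^ (n + 1) := by
  change A = segreNumerator n d a at hA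
  subst hA
  have hd' : d ^ (n + 1) ≠ 0 := pow_ne_zero _ (by omega)
  exact ⟨T_eq_segreNumerator_mul_invOneAdd_pow n d a, coeff_segreNumerator_nonneg (by omega) ha,
    natDegree_segreNumerator hd' a, leadingCoeff_segreNumerator hd' a⟩
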